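/- Let t be a positive integer and for each i ∈ {1,…,t} let F_i be a finite field with q_i elements and m_i a positive integer. Let R = ∏_{i=1}^{t} Matrix (Fin m_i) (Fin m_i) F_i be the product ring. Define ω : R → ℝ by ω(A_1,…,A_t) = 1 − ∏_{i=1}^{t} ( (−1)^(r_i) · q_i^(r_i(r_i−1)/2) / ∏_{l=0}^{r_i−1} (q_i^(m_i) − q_i^l) ), where r_i = rank(A_i). Then ω is a normalized homogeneous weight on R. -/

import Mathlib

/-- The principal left ideal generated by `x`, as a set: `{r * x : r ∈ R}`. -/
def leftOrbit {R : Type*} [Ring R] (x : R) : Set R := {z | ∃ r : R, z = r * x}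

/-- `ω` is a normalized homogeneous weight on the finite ring `R`. -/
def IsNormHomWeight {R : Type*} [Ring R] [Finite R] (ω : R → ℝ) : Prop :=
  ω 0 = 0 ∧
  (∀ x y : R, leftOrbit x = leftOrbit y → ω x = ω y) ∧
  (∀ x : R, x ≠ 0 →
    ∑ y ∈ (Set.toFinite (leftOrbit x)).toFinset, ω y
      = ((Set.toFinite (leftOrbit x)).toFinset.card : ℝ))

/-!
A weight `x ↦ 1 - ∏ i, c i (x i)` on a finite product ring is homogeneous as soon as each factor is
`1` at `0`, is constant on generators of a principal left ideal and sums to `0` over every nonzero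
principal left ideal: the sum over `Rx` of the product factors into the product of the sums.

For a matrix `A` of rank `k ≥ 1` over `𝔽_q`, the left multiples `φ ∘ A` of `A` are parametrized by
the images under `φ` of a basis of the range of `A`, i.e. by `k`-tuples of vectors in `𝔽_q^m`, and
the rank of `φ ∘ A` is the dimension of their span. Appending a vector to a tuple spanning an
`r`-dimensional space keeps the dimension for `q ^ r` choices and raises it to `r + 1` for the other
`q ^ m - q ^ r`, and `q ^ r c(r) + (q ^ m - q ^ r) c(r + 1) = 0` for the coefficients `c(r)` of the
weight.
-/

open Module Submodule

/-- For `A ∈ R = M_m(𝔽_q)` of rank `r` this is `μ(0, RA) / |(RA)ˣ|`: the Möbius function of the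
lattice of subspaces of `𝔽_q^r` over the number of injective linear maps `𝔽_q^r → 𝔽_q^m`. -/
noncomputable def rankCoeff (q m r : ℕ) : ℝ :=
  (-1 : ℝ) ^ r * (q : ℝ) ^ (r * (r - 1) / 2) / ∏ l ∈ Finset.range r, ((q : ℝ) ^ m - (q : ℝ) ^ l)

theorem rankCoeff_zero (q m : ℕ) : rankCoeff q m 0 = 1 := by
  simp [rankCoeff]

theorem rankCoeff_recurrence {q m r : ℕ} (hq : 1 < q) (hr : r < m) :
    (q : ℝ) ^ r * rankCoeff q m r + ((q : ℝ) ^ m - (q : ℝ) ^ r) * rankCoeff q m (r + 1) = 0 := by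
  have hgap : ∀ l ≤ r, (q : ℝ) ^ m - (q : ℝ) ^ l ≠ 0 := fun l hl =>
    sub_ne_zero.2 (pow_lt_pow_right₀ (by exact_mod_cast hq) (by omega)).ne'
  have hprod : ∏ l ∈ Finset.range r, ((q : ℝ) ^ m - (q : ℝ) ^ l) ≠ 0 :=
    Finset.prod_ne_zero_iff.2 fun l hl => hgap l (Finset.mem_range.1 hl).le
  have hlast := hgap r le_rfl
  unfold rankCoeff
  rw [Finset.prod_range_succ, Nat.triangle_succ, pow_add, pow_succ]
  field_simp
  ring

section Tuples

theorem finrank_sup_span_singleton_eq_ite {K V : Type*} [DivisionRing K] [AddCommGroup V]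
    [Module K V] [Module.Finite K V] (W : Submodule K V) (x : V) [Decidable (x ∈ W)] :
    finrank K ↥(W ⊔ span K {x}) = if x ∈ W then finrank K W else finrank K W + 1 := by
  split_ifs with hx
  · rw [sup_eq_left.2 ((span_singleton_le_iff_mem x W).2 hx)]
  · exact finrank_sup_span_singleton hx

variable {F V : Type*} [Field F] [Fintype F] [AddCommGroup V] [Module F V] [Fintype V]

theorem sum_rankCoeff_finrank_sup_span_singleton (W : Submodule F V)
    (hW : finrank F W < finrank F V) :
    ∑ x : V, rankCoeff (Fintype.card F) (finrank F V) (finrank F ↥(W ⊔ span F {x})) = 0 := by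
  classical
  set q := Fintype.card F
  have hcard_in : (Finset.univ.filter (· ∈ W)).card = q ^ finrank F W := by
    rw [← Fintype.card_subtype, card_eq_pow_finrank (K := F) (V := W)]
  have hcard_out : (Finset.univ.filter (· ∉ W)).card = q ^ finrank F V - q ^ finrank F W := by
    rw [Finset.filter_not, Finset.card_sdiff_of_subset (Finset.filter_subset _ _), hcard_in,
      Finset.card_univ, card_eq_pow_finrank (K := F) (V := V)]
  have hle : q ^ finrank F W ≤ q ^ finrank F V :=
    Nat.pow_le_pow_right Fintype.card_pos hW.le
  simp_rw [finrank_sup_span_singleton_eq_ite, apply_ite (rankCoeff q (finrank F V))]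
  rw [Finset.sum_ite, Finset.sum_const, Finset.sum_const, hcard_in, hcard_out, nsmul_eq_mul,
    nsmul_eq_mul, Nat.cast_sub hle]
  push_cast
  exact rankCoeff_recurrence Fintype.one_lt_card hW

theorem sum_rankCoeff_finrank_span_range {k : ℕ} (hk : k < finrank F V) :
    ∑ v : Fin (k + 1) → V,
      rankCoeff (Fintype.card F) (finrank F V) (finrank F (span F (Set.range v))) = 0 := by
  rw [← (Fin.consEquiv fun _ => V).sum_comp, Fintype.sum_prod_type_right]
  refine Finset.sum_eq_zero fun w _ => ?_
  have hw : finrank F (span F (Set.range w)) ≤ k := by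
    simpa [Set.finrank] using finrank_range_le_card (R := F) w
  have hspan (x : V) : span F (Set.range ((Fin.consEquiv fun _ => V) (x, w))) =
      span F (Set.range w) ⊔ span F {x} := by
    change span F (Set.range (Fin.cons x w : Fin (k + 1) → V)) = _
    rw [Fin.range_cons, span_insert, sup_comm]
  rw [Finset.sum_congr rfl fun x _ => by rw [hspan x]]
  exact sum_rankCoeff_finrank_sup_span_singleton _ (by omega)

end Tuples

theorem mem_leftOrbit_self {R : Type*} [Ring R] (x : R) : x ∈ leftOrbit x :=
  ⟨1, (one_mul x).symm⟩

theorem leftOrbit_pi {ι : Type*} {R : ι → Type*} [∀ i, Ring (R i)] (x : ∀ i, R i) :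
    leftOrbit x = Set.univ.pi fun i => leftOrbit (x i) := by
  ext y
  simp only [leftOrbit, Set.mem_ofPred_eq, Set.mem_univ_pi]
  constructor
  · rintro ⟨r, rfl⟩ i
    exact ⟨r i, rfl⟩
  · intro h
    choose r hr using h
    exact ⟨r, funext hr⟩

theorem leftOrbit_apply {ι : Type*} {R : ι → Type*} [∀ i, Ring (R i)] (x : ∀ i, R i) (i : ι) :
    leftOrbit (x i) = Function.eval i '' leftOrbit x := by
  rw [leftOrbit_pi, Set.eval_image_univ_pi ⟨x, by simp [← leftOrbit_pi, mem_leftOrbit_self]⟩]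

theorem sum_leftOrbit_prod {ι : Type*} [Fintype ι] [DecidableEq ι] {R : ι → Type*}
    [∀ i, Ring (R i)] [∀ i, Finite (R i)] {M : Type*} [CommSemiring M] (x : ∀ i, R i)
    (f : ∀ i, R i → M) :
    ∑ y ∈ (Set.toFinite (leftOrbit x)).toFinset, ∏ i, f i (y i) =
      ∏ i, ∑ z ∈ (Set.toFinite (leftOrbit (x i))).toFinset, f i z := by
  rw [Finset.prod_univ_sum]
  congr 1
  ext y
  simp [leftOrbit_pi]

theorem isNormHomWeight_one_sub_prod {ι : Type*} [Fintype ι] {R : ι → Type*}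
    [∀ i, Ring (R i)] [∀ i, Finite (R i)] (c : ∀ i, R i → ℝ) (hc_zero : ∀ i, c i 0 = 1)
    (hc_orbit : ∀ i (x y : R i), leftOrbit x = leftOrbit y → c i x = c i y)
    (hc_sum : ∀ i (x : R i), x ≠ 0 → ∑ y ∈ (Set.toFinite (leftOrbit x)).toFinset, c i y = 0) :
    IsNormHomWeight fun x : ∀ i, R i => 1 - ∏ i, c i (x i) := by
  classical
  refine ⟨by simp [hc_zero], fun x y hxy => ?_, fun x hx => ?_⟩
  · have hcomp (i : ι) : leftOrbit (x i) = leftOrbit (y i) := by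
      rw [leftOrbit_apply, leftOrbit_apply, hxy]
    simp only [hc_orbit _ _ _ (hcomp _)]
  · obtain ⟨i, hi⟩ := Function.ne_iff.1 hx
    rw [Finset.sum_sub_distrib, sum_leftOrbit_prod,
      Finset.prod_eq_zero (Finset.mem_univ i) (hc_sum i (x i) hi)]
    simp

section Matrix

variable {n : Type*} [Fintype n] [DecidableEq n]

theorem Matrix.rank_le_of_mem_leftOrbit {R : Type*} [CommRing R] [StrongRankCondition R]
    {A B : Matrix n n R} (h : B ∈ leftOrbit A) : B.rank ≤ A.rank := by
  obtain ⟨C, rfl⟩ := h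
  exact Matrix.rank_mul_le_right C A

theorem Matrix.rank_eq_of_leftOrbit_eq {R : Type*} [CommRing R] [StrongRankCondition R]
    {A B : Matrix n n R} (h : leftOrbit A = leftOrbit B) : A.rank = B.rank :=
  le_antisymm (rank_le_of_mem_leftOrbit (h ▸ mem_leftOrbit_self A))
    (rank_le_of_mem_leftOrbit (h ▸ mem_leftOrbit_self B))

variable {F : Type*} [Field F]

theorem Matrix.rank_ne_zero {m : Type*} {A : Matrix m n F} (hA : A ≠ 0) : A.rank ≠ 0 := by
  intro h
  have hrange : LinearMap.range A.mulVecLin = ⊥ := Submodule.finrank_eq_zero.1 h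
  rw [LinearMap.range_eq_bot] at hrange
  rw [← LinearMap.toMatrix'_toLin' A, Matrix.toLin'_apply', hrange, map_zero] at hA
  exact hA rfl

theorem Matrix.leftOrbit_eq_range (A : Matrix n n F) :
    leftOrbit A = Set.range fun φ : LinearMap.range A.mulVecLin →ₗ[F] n → F =>
      LinearMap.toMatrix' (φ ∘ₗ A.mulVecLin.rangeRestrict) := by
  ext B
  constructor
  · rintro ⟨C, rfl⟩
    refine ⟨C.mulVecLin ∘ₗ (LinearMap.range A.mulVecLin).subtype, ?_⟩
    simp only
    rw [LinearMap.comp_assoc, LinearMap.subtype_comp_codRestrict, ← Matrix.mulVecLin_mul,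
      ← Matrix.toLin'_apply', LinearMap.toMatrix'_toLin']
  · rintro ⟨φ, rfl⟩
    obtain ⟨g, hg⟩ := φ.exists_extend
    refine ⟨LinearMap.toMatrix' g, Matrix.toLin'.injective ?_⟩
    simp only
    rw [Matrix.toLin'_mul, Matrix.toLin'_toMatrix', Matrix.toLin'_toMatrix', ← hg,
      LinearMap.comp_assoc, LinearMap.subtype_comp_codRestrict, Matrix.toLin'_apply']

theorem Matrix.sum_leftOrbit_rank [Fintype F] {M : Type*} [AddCommMonoid M] (A : Matrix n n F)
    (g : ℕ → M) :
    ∑ B ∈ (Set.toFinite (leftOrbit A)).toFinset, g B.rank =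
      ∑ v : Fin A.rank → n → F, g (finrank F (span F (Set.range v))) := by
  let b : Basis (Fin A.rank) F (LinearMap.range A.mulVecLin) := Module.finBasis F _
  let Ψ (v : Fin A.rank → n → F) : Matrix n n F :=
    LinearMap.toMatrix' (b.constr F v ∘ₗ A.mulVecLin.rangeRestrict)
  have hrank (v : Fin A.rank → n → F) : (Ψ v).rank = finrank F (span F (Set.range v)) := by
    rw [Matrix.rank, ← Matrix.toLin'_apply', Matrix.toLin'_toMatrix',
      LinearMap.range_comp_of_range_eq_top _ (LinearMap.range_rangeRestrict _), b.constr_range]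
  symm
  refine Finset.sum_nbij Ψ (fun v _ => ?_) (fun v _ w _ hvw => ?_) (fun B hB => ?_)
    (fun v _ => by rw [hrank])
  · rw [Set.Finite.mem_toFinset, A.leftOrbit_eq_range]
    exact ⟨_, rfl⟩
  · rw [LinearMap.toMatrix'.injective.eq_iff,
      LinearMap.cancel_right A.mulVecLin.surjective_rangeRestrict] at hvw
    exact (b.constr F).injective hvw
  · rw [Set.Finite.coe_toFinset, A.leftOrbit_eq_range] at hB
    obtain ⟨φ, rfl⟩ := hB
    exact ⟨(b.constr F).symm φ, Finset.mem_coe.2 (Finset.mem_univ _), by simp [Ψ]⟩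

theorem Matrix.sum_leftOrbit_rankCoeff [Fintype F] {A : Matrix n n F} (hA : A ≠ 0) :
    ∑ B ∈ (Set.toFinite (leftOrbit A)).toFinset,
      rankCoeff (Fintype.card F) (Fintype.card n) B.rank = 0 := by
  obtain ⟨k, hk⟩ := Nat.exists_eq_add_one.2 (Nat.pos_of_ne_zero (Matrix.rank_ne_zero hA))
  have hk_lt : k < finrank F (n → F) := by
    rw [finrank_fintype_fun_eq_card]
    have := A.rank_le_card_width
    omega
  rw [Matrix.sum_leftOrbit_rank, ← finrank_fintype_fun_eq_card F (η := n), hk]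
  exact sum_rankCoeff_finrank_span_range hk_lt

end Matrix

theorem homogeneous_weight_product_of_matrix_rings_general
    (t : ℕ) (mdim : Fin t → ℕ)
    (F : Fin t → Type*) [∀ i, Field (F i)] [∀ i, Fintype (F i)]
    (q : Fin t → ℕ) (hq : ∀ i, Fintype.card (F i) = q i)
    (ω : (∀ i, Matrix (Fin (mdim i)) (Fin (mdim i)) (F i)) → ℝ)
    (hω : ∀ A : ∀ i, Matrix (Fin (mdim i)) (Fin (mdim i)) (F i),
      ω A = 1 - ∏ i : Fin t,
        ((-1 : ℝ) ^ (A i).rank * (q i : ℝ) ^ ((A i).rank * ((A i).rank - 1) / 2)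
          / ∏ l ∈ Finset.range (A i).rank, ((q i : ℝ) ^ (mdim i) - (q i : ℝ) ^ l))) :
    IsNormHomWeight ω := by
  obtain rfl : ω = fun A => 1 - ∏ i, rankCoeff (q i) (mdim i) (A i).rank := funext hω
  refine isNormHomWeight_one_sub_prod
    (fun i (A : Matrix (Fin (mdim i)) (Fin (mdim i)) (F i)) => rankCoeff (q i) (mdim i) A.rank)
    (fun i => ?_) (fun i A B hAB => ?_) (fun i A hA => ?_)
  · rw [Matrix.rank_zero, rankCoeff_zero]
  · rw [Matrix.rank_eq_of_leftOrbit_eq hAB]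
  · simpa [hq] using Matrix.sum_leftOrbit_rankCoeff hA

theorem homogeneous_weight_product_of_matrix_rings
    (t : ℕ) (ht : 0 < t) (mdim : Fin t → ℕ) (hm : ∀ i, 0 < mdim i)
    (F : Fin t → Type*) [∀ i, Field (F i)] [∀ i, Fintype (F i)]
    (q : Fin t → ℕ) (hq : ∀ i, Fintype.card (F i) = q i)
    (ω : (∀ i, Matrix (Fin (mdim i)) (Fin (mdim i)) (F i)) → ℝ)
    (hω : ∀ A : ∀ i, Matrix (Fin (mdim i)) (Fin (mdim i)) (F i),
      ω A = 1 - ∏ i : Fin t,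
        ((-1 : ℝ) ^ (A i).rank * (q i : ℝ) ^ ((A i).rank * ((A i).rank - 1) / 2)
          / ∏ l ∈ Finset.range (A i).rank, ((q i : ℝ) ^ (mdim i) - (q i : ℝ) ^ l))) :
    IsNormHomWeight ω :=
  homogeneous_weight_product_of_matrix_rings_general t mdim F q hq ω hω
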